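/- arXiv:1610.05127 — 8 statements merged into one kernel-verified Lean document; each statement's English description precedes it below -/
import Mathlib

section
/- Let X be a nonempty finite set of vectors in {0,1}^n, let ĉ ∈ ℝ^n with ĉ_i ≥ 0, and let w : [0,1] → ℝ_{≥0} be integrable with ∫₀¹ (1+λ)w(λ) dλ > 0. Define val(x) = ∫₀¹ w(λ) · (1+λ) ĉᵗx dλ, which equals ∫₀¹ w(λ) (max over c in the box ∏ᵢ[(1−λ)ĉᵢ,(1+λ)ĉᵢ] of cᵗx) dλ. Then any x̂ ∈ X minimizing ĉᵗx over X also minimizes val(x) over X. -/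
open MeasureTheory Finset

theorem intervalIntegral_mul_mul_const (w f : ℝ → ℝ) (a b c : ℝ) :
    ∫ t in a..b, w t * (f t * c) = (∫ t in a..b, f t * w t) * c := by
  rw [← intervalIntegral.integral_mul_const]
  congr 1 with t
  ring

theorem stmt0_general {n : ℕ} (X : Finset (Fin n → ℝ))
    (chat : Fin n → ℝ)
    (w : ℝ → ℝ)
    (hpos : 0 < ∫ t in (0:ℝ)..1, (1 + t) * w t)
    (val : (Fin n → ℝ) → ℝ)
    (hval : ∀ x, val x = ∫ t in (0:ℝ)..1, w t * ((1 + t) * ∑ i, chat i * x i))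
    (xhat : Fin n → ℝ)
    (hmin : ∀ x ∈ X, ∑ i, chat i * xhat i ≤ ∑ i, chat i * x i) :
    ∀ x ∈ X, val xhat ≤ val x := by
  have val_eq : ∀ y, val y = (∫ t in (0:ℝ)..1, (1 + t) * w t) * ∑ i, chat i * y i :=
    fun y => (hval y).trans (intervalIntegral_mul_mul_const _ _ _ _ _)
  intro x hx
  rw [val_eq, val_eq]
  exact mul_le_mul_of_nonneg_left (hmin x hx) hpos.le

theorem stmt0 {n : ℕ} (X : Finset (Fin n → ℝ)) (hX : X.Nonempty)
    (hbin : ∀ x ∈ X, ∀ i, x i = 0 ∨ x i = 1)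
    (chat : Fin n → ℝ) (hc : ∀ i, 0 ≤ chat i)
    (w : ℝ → ℝ) (hw : IntervalIntegrable w volume 0 1)
    (hwnn : ∀ t ∈ Set.Icc (0:ℝ) 1, 0 ≤ w t)
    (hpos : 0 < ∫ t in (0:ℝ)..1, (1 + t) * w t)
    (val : (Fin n → ℝ) → ℝ)
    (hval : ∀ x, val x = ∫ t in (0:ℝ)..1, w t * ((1 + t) * ∑ i, chat i * x i))
    (xhat : Fin n → ℝ) (hxhat : xhat ∈ X)
    (hmin : ∀ x ∈ X, ∑ i, chat i * xhat i ≤ ∑ i, chat i * x i) :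
    ∀ x ∈ X, val xhat ≤ val x :=
  stmt0_general X chat w hpos val hval xhat hmin
end

section
/- Let X ⊆ ℝ^n be nonempty and finite, ĉ ∈ ℝ^n, C an n×m matrix, Λ ⊆ ℝ_{≥0} an interval, and w : Λ → ℝ_{≥0} integrable with W := ∫_Λ w(λ) dλ > 0 and L := ∫_Λ λ w(λ) dλ finite. Define val(x) = ∫_Λ w(λ)(ĉᵗx + λ‖Cᵗx‖₂) dλ. Then x* minimizes val over X if and only if x* minimizes ĉᵗx + λ'‖Cᵗx‖₂ over X, where λ' = L/W. -/
open MeasureTheory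

/-- The Euclidean norm of `Cᵀ x`. -/
noncomputable def ellNorm {n m : ℕ} (C : Matrix (Fin n) (Fin m) ℝ) (x : Fin n → ℝ) : ℝ :=
  ‖(EuclideanSpace.equiv (Fin m) ℝ).symm (C.transpose.mulVec x)‖

/-! Integrating `λ ↦ w λ (a + λ b)` only sees the zeroth and first moments of `w`, so the weighted
objective is a positive multiple `W (ĉᵗx + (L / W) ‖Cᵗx‖₂)` of the robust objective at the
centroid `L / W`, and scaling by `W > 0` does not change the minimizers. -/

theorem integral_mul_affine {α : Type*} [MeasurableSpace α] {μ : Measure α} {w t : α → ℝ}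
    (hw : Integrable w μ) (htw : Integrable (fun x => t x * w x) μ) (a b : ℝ) :
    ∫ x, w x * (a + t x * b) ∂μ = a * ∫ x, w x ∂μ + b * ∫ x, t x * w x ∂μ := by
  rw [← integral_const_mul, ← integral_const_mul, ← integral_add (hw.const_mul a) (htw.const_mul b)]
  congr 1 with x
  ring

theorem forall_le_iff_of_eq_const_mul {ι 𝕜 : Type*} [MulZeroClass 𝕜] [Preorder 𝕜]
    [PosMulMono 𝕜] [PosMulReflectLE 𝕜] {f g : ι → 𝕜} {c : 𝕜} (hc : 0 < c) (hfg : ∀ i, f i = c * g i)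
    (S : Set ι) (i₀ : ι) :
    (∀ i ∈ S, f i₀ ≤ f i) ↔ ∀ i ∈ S, g i₀ ≤ g i := by
  simp only [hfg, mul_le_mul_iff_right₀ hc]

theorem stmt3_general {n m : ℕ} (X : Finset (Fin n → ℝ))
    (chat : Fin n → ℝ) (C : Matrix (Fin n) (Fin m) ℝ)
    (s : Set ℝ)
    (w : ℝ → ℝ)
    (hw : IntegrableOn w s) (hlw : IntegrableOn (fun t => t * w t) s)
    (W L : ℝ) (hW : W = ∫ t in s, w t) (hL : L = ∫ t in s, t * w t)
    (hWpos : 0 < W)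
    (val : (Fin n → ℝ) → ℝ)
    (hval : ∀ x, val x = ∫ t in s, w t * ((∑ i, chat i * x i) + t * ellNorm C x))
    (xstar : Fin n → ℝ) :
    (∀ x ∈ X, val xstar ≤ val x) ↔
    (∀ x ∈ X, (∑ i, chat i * xstar i) + (L / W) * ellNorm C xstar ≤
              (∑ i, chat i * x i) + (L / W) * ellNorm C x) := by
  have hval_centroid : ∀ x, val x = W * ((∑ i, chat i * x i) + (L / W) * ellNorm C x) := by
    intro x
    rw [hval, integral_mul_affine hw hlw, ← hW, ← hL]
    field_simp
  exact forall_le_iff_of_eq_const_mul hWpos hval_centroid X xstar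

theorem stmt3 {n m : ℕ} (X : Finset (Fin n → ℝ)) (hX : X.Nonempty)
    (chat : Fin n → ℝ) (C : Matrix (Fin n) (Fin m) ℝ)
    (s : Set ℝ) (hs : s ⊆ Set.Ici 0) (hsi : s.OrdConnected) (hms : MeasurableSet s)
    (w : ℝ → ℝ) (hwnn : ∀ t ∈ s, 0 ≤ w t)
    (hw : IntegrableOn w s) (hlw : IntegrableOn (fun t => t * w t) s)
    (W L : ℝ) (hW : W = ∫ t in s, w t) (hL : L = ∫ t in s, t * w t)
    (hWpos : 0 < W)
    (val : (Fin n → ℝ) → ℝ)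
    (hval : ∀ x, val x = ∫ t in s, w t * ((∑ i, chat i * x i) + t * ellNorm C x))
    (xstar : Fin n → ℝ) (hxs : xstar ∈ X) :
    (∀ x ∈ X, val xstar ≤ val x) ↔
    (∀ x ∈ X, (∑ i, chat i * xstar i) + (L / W) * ellNorm C xstar ≤
              (∑ i, chat i * x i) + (L / W) * ellNorm C x) :=
  stmt3_general X chat C s w hw hlw W L hW hL hWpos val hval xstar
end

section
/- In the min-max regret selection problem with uncertainty U(λ) = ∏_i [(1−λ)ĉ_i,(1+λ)ĉ_i] for fixed λ ∈ [0,1] and ĉ ≥ 0, a solution x̂ selecting the p items of smallest nominal cost ĉ minimizes the regret Reg(x) = max_{c∈U(λ)}(cᵗx − min_{y∈X} cᵗy) over all feasible selections x. -/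
/-!
The regret of a selection `x` is attained at the scenario that raises the costs of the items of `x`
to `(1 + l) ĉ` and lowers all others to `(1 - l) ĉ`: for every scenario `c` and selection `y`,
`c ⬝ (x - y)` is at most the same expression for that scenario. Now let `x̂` hold the `p` cheapest
items and let `π` be a permutation carrying `x̂` to another selection `x` by exchanging `x̂ \ x`
with `x \ x̂` and fixing everything else. It can only make the items of `x̂` more expensive and the
other items cheaper, so transporting the competitor `y` along `π` turns every worst-case regret
term of `x̂` into a larger one of `x`.
-/

open Finset Equiv

theorem Finset.exists_perm_map_eq_of_card_eq {α : Type*} [DecidableEq α] {A B : Finset α}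
    (h : #A = #B) :
    ∃ π : Perm α, A.map π.toEmbedding = B ∧ ∀ i, π i = i ∨ (π i ∈ A ↔ i ∉ A) := by
  set e := equivOfCardEq (card_sdiff_comm h)
  let f : α → α := fun i =>
    if h : i ∈ A \ B then e ⟨i, h⟩ else if h' : i ∈ B \ A then e.symm ⟨i, h'⟩ else i
  have hf₁ : ∀ i (h : i ∈ A \ B), f i = e ⟨i, h⟩ := fun i h => dif_pos h
  have hf₂ : ∀ i (h : i ∈ B \ A), f i = e.symm ⟨i, h⟩ := fun i h => by
    have : i ∉ A \ B := fun h' => (mem_sdiff.1 h).2 (mem_sdiff.1 h').1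
    simp only [f, dif_neg this, dif_pos h]
  have hf₃ : ∀ i, i ∉ A \ B → i ∉ B \ A → f i = i := fun i h h' => by
    simp only [f, dif_neg h, dif_neg h']
  have hf : Function.Involutive f := by
    intro i
    by_cases hAB : i ∈ A \ B
    · rw [hf₁ i hAB, hf₂ _ (e _).2]; simp
    by_cases hBA : i ∈ B \ A
    · rw [hf₂ i hBA, hf₁ _ (e.symm _).2]; simp
    rw [hf₃ i hAB hBA, hf₃ i hAB hBA]
  refine ⟨hf.toPerm f, ?_, fun i => ?_⟩
  · refine eq_of_subset_of_card_le (fun j hj => ?_) (by rw [card_map, h])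
    obtain ⟨i, hi, rfl⟩ := mem_map.1 hj
    simp only [Function.Involutive.coe_toPerm, Equiv.toEmbedding_apply]
    by_cases hiB : i ∈ B
    · rwa [hf₃ i (fun h' => (mem_sdiff.1 h').2 hiB) (fun h' => (mem_sdiff.1 h').2 hi)]
    · exact (mem_sdiff.1 (hf₁ i (mem_sdiff.2 ⟨hi, hiB⟩) ▸ (e _).2)).1
  · simp only [Function.Involutive.coe_toPerm]
    by_cases hAB : i ∈ A \ B
    · have := (e ⟨i, hAB⟩).2
      rw [← hf₁ i hAB, mem_sdiff] at this
      exact Or.inr (iff_of_false this.2 (not_not.2 (mem_sdiff.1 hAB).1))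
    by_cases hBA : i ∈ B \ A
    · have := (e.symm ⟨i, hBA⟩).2
      rw [← hf₂ i hBA, mem_sdiff] at this
      exact Or.inr (iff_of_true this.1 (mem_sdiff.1 hBA).2)
    exact Or.inl (hf₃ i hAB hBA)

theorem sum_eq_card_filter_eq_one {ι : Type*} [Fintype ι] {u : ι → ℝ}
    (hu : ∀ i, u i = 0 ∨ u i = 1) : ∑ i, u i = #{i | u i = 1} := by
  rw [natCast_card_filter]
  refine sum_congr rfl fun i _ => ?_
  rcases hu i with h | h <;> simp [h]

theorem exists_perm_comp_eq_of_sum_eq {ι : Type*} [Fintype ι] {u v : ι → ℝ}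
    (hu : ∀ i, u i = 0 ∨ u i = 1) (hv : ∀ i, v i = 0 ∨ v i = 1) (h : ∑ i, u i = ∑ i, v i) :
    ∃ π : Perm ι, v ∘ π = u ∧ ∀ i, π i = i ∨ u (π i) ≠ u i := by
  classical
  rw [sum_eq_card_filter_eq_one hu, sum_eq_card_filter_eq_one hv, Nat.cast_inj] at h
  obtain ⟨π, hmap, hπ⟩ := exists_perm_map_eq_of_card_eq h
  have hmem : ∀ i, v (π i) = 1 ↔ u i = 1 := fun i => by
    have := mem_map' π.toEmbedding (s := {i | u i = 1}) (a := i)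
    rw [hmap] at this
    simpa using this
  refine ⟨π, funext fun i => ?_, fun i => (hπ i).imp_right fun hi => ?_⟩
  · have := hmem i
    rcases hu i with h | h <;> rcases hv (π i) with h' | h' <;> simp_all
  · simp only [mem_filter, mem_univ, true_and] at hi
    rcases hu i with h | h <;> simp_all

namespace MinMaxRegret

section Scenarios

variable {ι : Type*} (l : ℝ) (chat : ι → ℝ)

def IsScenario (c : ι → ℝ) : Prop :=
  ∀ i, (1 - l) * chat i ≤ c i ∧ c i ≤ (1 + l) * chat i

/-- On a 0-1 vector `x`: cost `(1 + l) * chat i` on the items `x` selects and `(1 - l) * chat i`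
on the others. -/
def worstCase (x : ι → ℝ) : ι → ℝ := fun i => (1 - l + 2 * l * x i) * chat i

variable {l chat}

theorem IsScenario.nonneg (hc : ∀ i, 0 ≤ chat i) (hl : l ≤ 1) {c : ι → ℝ}
    (h : IsScenario l chat c) (i : ι) : 0 ≤ c i :=
  (mul_nonneg (sub_nonneg.2 hl) (hc i)).trans (h i).1

theorem isScenario_worstCase (hc : ∀ i, 0 ≤ chat i) (hl : 0 ≤ l) {x : ι → ℝ}
    (hx : ∀ i, x i = 0 ∨ x i = 1) : IsScenario l chat (worstCase l chat x) := fun i => by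
  have := mul_nonneg hl (hc i)
  rcases hx i with h | h <;> simp only [worstCase, h] <;> constructor <;> linarith

end Scenarios

variable {ι : Type*} [Fintype ι] (p : ℕ) (l : ℝ) (chat : ι → ℝ)

def IsSelection (x : ι → ℝ) : Prop :=
  (∀ i, x i = 0 ∨ x i = 1) ∧ ∑ i, x i = p

noncomputable def minCost (c : ι → ℝ) : ℝ :=
  sInf {v | ∃ y, IsSelection p y ∧ v = c ⬝ᵥ y}

noncomputable def regret (x : ι → ℝ) : ℝ :=
  sSup {v | ∃ c, IsScenario l chat c ∧ v = c ⬝ᵥ x - minCost p c}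

variable {p l chat}

theorem IsSelection.comp_perm {x : ι → ℝ} (hx : IsSelection p x) (π : Perm ι) :
    IsSelection p (x ∘ π) :=
  ⟨fun i => hx.1 (π i), (Equiv.sum_comp π x).trans hx.2⟩

theorem bddBelow_costs (c : ι → ℝ) : BddBelow {v | ∃ y, IsSelection p y ∧ v = c ⬝ᵥ y} := by
  refine ⟨-∑ i, |c i|, ?_⟩
  rintro _ ⟨y, hy, rfl⟩
  rw [← sum_neg_distrib]
  refine sum_le_sum fun i _ => ?_
  rcases hy.1 i with h | h <;> simp [h, neg_abs_le]

theorem minCost_le (c : ι → ℝ) {y : ι → ℝ} (hy : IsSelection p y) : minCost p c ≤ c ⬝ᵥ y :=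
  csInf_le (bddBelow_costs c) ⟨y, hy, rfl⟩

theorem le_minCost {c : ι → ℝ} {a : ℝ} (hne : ∃ y : ι → ℝ, IsSelection p y)
    (h : ∀ y, IsSelection p y → a ≤ c ⬝ᵥ y) : a ≤ minCost p c := by
  obtain ⟨y, hy⟩ := hne
  exact le_csInf ⟨_, y, hy, rfl⟩ fun _ ⟨y, hy, hv⟩ => hv ▸ h y hy

theorem bddAbove_regrets (hc : ∀ i, 0 ≤ chat i) (hl : l ≤ 1) {x : ι → ℝ}
    (hx : IsSelection p x) :
    BddAbove {v | ∃ c, IsScenario l chat c ∧ v = c ⬝ᵥ x - minCost p c} := by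
  refine ⟨∑ i, (1 + l) * chat i, ?_⟩
  rintro _ ⟨c, hcs, rfl⟩
  have hmin : 0 ≤ minCost p c :=
    le_minCost ⟨x, hx⟩ fun y hy => sum_nonneg fun i _ => by
      rcases hy.1 i with h | h <;> simp [h, hcs.nonneg hc hl i]
  have hcx : c ⬝ᵥ x ≤ ∑ i, (1 + l) * chat i := sum_le_sum fun i _ => by
    rcases hx.1 i with h | h
    · simp only [h, mul_zero]; linarith [hcs.nonneg hc hl i, (hcs i).2]
    · simpa [h] using (hcs i).2
  linarith

theorem worstCase_sub_minCost_le_regret (hc : ∀ i, 0 ≤ chat i) (hl : l ∈ Set.Icc (0 : ℝ) 1)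
    {x : ι → ℝ} (hx : IsSelection p x) :
    worstCase l chat x ⬝ᵥ x - minCost p (worstCase l chat x) ≤ regret p l chat x :=
  le_csSup (bddAbove_regrets hc hl.2 hx) ⟨_, isScenario_worstCase hc hl.1 hx.1, rfl⟩

theorem dotProduct_sub_le_worstCase {c x y : ι → ℝ} (hcs : IsScenario l chat c)
    (hx : ∀ i, x i = 0 ∨ x i = 1) (hy : ∀ i, 0 ≤ y i ∧ y i ≤ 1) :
    c ⬝ᵥ (x - y) ≤ worstCase l chat x ⬝ᵥ (x - y) := by
  refine sum_le_sum fun i _ => ?_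
  have := hcs i
  have := hy i
  rcases hx i with h | h <;> simp only [worstCase, Pi.sub_apply, h] <;> nlinarith

theorem worstCase_dotProduct_sub_le_comp_perm (hl : l ∈ Set.Icc (0 : ℝ) 1)
    {xhat x y : ι → ℝ} (hxhat : ∀ i, xhat i = 0 ∨ xhat i = 1)
    (hsmall : ∀ i j, xhat i = 1 → xhat j = 0 → chat i ≤ chat j)
    {π : Perm ι} (hπ : x ∘ π = xhat) (hswap : ∀ i, π i = i ∨ xhat (π i) ≠ xhat i)
    (hy : ∀ i, 0 ≤ y i ∧ y i ≤ 1) :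
    worstCase l chat xhat ⬝ᵥ (xhat - y) ≤ worstCase l chat x ⬝ᵥ (x - y ∘ π.symm) := by
  have hx : x - y ∘ π.symm = (x ∘ π - y) ∘ π.symm := funext fun i => by simp
  rw [hx, dotProduct_comp_equiv_symm, hπ]
  refine sum_le_sum fun i _ => ?_
  have hxi : x (π i) = xhat i := congrFun hπ i
  simp only [worstCase, Function.comp_apply, Pi.sub_apply, hxi]
  obtain ⟨hy0, hy1⟩ := hy i
  have hl₀ : 0 ≤ 1 - l := sub_nonneg.2 hl.2
  have hl₁ : 0 ≤ 1 + l := by linarith [hl.1]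
  rcases hxhat i with h | h
  · have hle : chat (π i) ≤ chat i := by
      rcases hswap i with e | e
      · rw [e]
      · exact hsmall _ _ ((hxhat (π i)).resolve_left (h ▸ e)) h
    rw [h]
    nlinarith [mul_nonneg (mul_nonneg hl₀ hy0) (sub_nonneg.2 hle)]
  · have hle : chat i ≤ chat (π i) := by
      rcases hswap i with e | e
      · rw [e]
      · exact hsmall _ _ h ((hxhat (π i)).resolve_right (h ▸ e))
    rw [h]
    nlinarith [mul_nonneg (mul_nonneg hl₁ (sub_nonneg.2 hy1)) (sub_nonneg.2 hle)]

theorem regret_le_regret_of_cheapest (hc : ∀ i, 0 ≤ chat i) (hl : l ∈ Set.Icc (0 : ℝ) 1)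
    {xhat : ι → ℝ} (hxhat : IsSelection p xhat)
    (hsmall : ∀ i j, xhat i = 1 → xhat j = 0 → chat i ≤ chat j)
    {x : ι → ℝ} (hx : IsSelection p x) : regret p l chat xhat ≤ regret p l chat x := by
  obtain ⟨π, hπ, hswap⟩ := exists_perm_comp_eq_of_sum_eq hxhat.1 hx.1 (hxhat.2.trans hx.2.symm)
  refine csSup_le ⟨_, _, isScenario_worstCase hc hl.1 hxhat.1, rfl⟩ ?_
  rintro _ ⟨c, hcs, rfl⟩
  suffices h : ∀ y, IsSelection p y → c ⬝ᵥ xhat - regret p l chat x ≤ c ⬝ᵥ y by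
    linarith [le_minCost ⟨xhat, hxhat⟩ h]
  intro y hy
  have hy01 : ∀ i, 0 ≤ y i ∧ y i ≤ 1 := fun i => by rcases hy.1 i with h | h <;> simp [h]
  have := calc c ⬝ᵥ (xhat - y)
      _ ≤ worstCase l chat xhat ⬝ᵥ (xhat - y) := dotProduct_sub_le_worstCase hcs hxhat.1 hy01
      _ ≤ worstCase l chat x ⬝ᵥ (x - y ∘ π.symm) :=
        worstCase_dotProduct_sub_le_comp_perm hl hxhat.1 hsmall hπ hswap hy01
      _ ≤ worstCase l chat x ⬝ᵥ x - minCost p (worstCase l chat x) := by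
        rw [dotProduct_sub]
        linarith [minCost_le (worstCase l chat x) (hy.comp_perm π.symm)]
      _ ≤ regret p l chat x := worstCase_sub_minCost_le_regret hc hl hx
  rw [dotProduct_sub] at this
  linarith

end MinMaxRegret

open MinMaxRegret in
theorem stmt7 {n : ℕ} (p : ℕ) (chat : Fin n → ℝ) (hc : ∀ i, 0 ≤ chat i)
    (l : ℝ) (hl : l ∈ Set.Icc (0:ℝ) 1)
    (feas : (Fin n → ℝ) → Prop)
    (hfeas : ∀ x, feas x ↔ ((∀ i, x i = 0 ∨ x i = 1) ∧ ∑ i, x i = (p : ℝ)))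
    (opt : (Fin n → ℝ) → ℝ)
    (hopt : ∀ c, opt c = sInf {v : ℝ | ∃ y, feas y ∧ v = ∑ i, c i * y i})
    (Reg : (Fin n → ℝ) → ℝ)
    (hReg : ∀ x, Reg x = sSup {v : ℝ | ∃ c : Fin n → ℝ,
        (∀ i, (1 - l) * chat i ≤ c i ∧ c i ≤ (1 + l) * chat i) ∧
        v = (∑ i, c i * x i) - opt c})
    (xhat : Fin n → ℝ) (hxhatf : feas xhat)
    (hsmall : ∀ i j, xhat i = 1 → xhat j = 0 → chat i ≤ chat j) :
    ∀ x, feas x → Reg xhat ≤ Reg x := by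
  obtain rfl : feas = IsSelection p := funext fun x => propext (hfeas x)
  obtain rfl : opt = minCost p := funext hopt
  obtain rfl : Reg = regret p l chat := funext hReg
  exact fun x hx => regret_le_regret_of_cheapest hc hl hxhatf hsmall hx
end

section
/- Consider the selection problem X = {x ∈ {0,1}^n : Σᵢ xᵢ = p} with nominal costs ĉ ≥ 0 and the compromise regret objective val(x) = ∫₀¹ reg(x,λ) dλ. A nominal solution x̂ (selecting p items of smallest ĉ) minimizes val over X. -/
/-!
For a 0/1 vector `x`, the regret `c ⬝ᵥ x - opt c` over the box `∏ [(1-λ)ĉᵢ, (1+λ)ĉᵢ]` is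
maximised by the scenario putting the chosen items at their upper bounds and all other items at
their lower bounds, so `reg (x, λ) = cˣ ⬝ᵥ x - opt cˣ`. Let `x̂` select `p` items of smallest
nominal cost and `x` be any other selection. The involution `σ` exchanging `x̂ \ x` with `x \ x̂`
turns each competitor `y` of `x̂` into a competitor `y ∘ σ⁻¹` of `x` that beats `x` by at least as
much, so `reg (x̂, λ) ≤ reg (x, λ)` for every `λ ∈ [0, 1]`. Both regrets are monotone in `λ`, hence
integrable, and the inequality integrates.
-/

open Finset Equiv Matrix

theorem Finset.exists_perm_exchange {ι : Type*} [DecidableEq ι] {s t : Finset ι} (h : #s = #t) :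
    ∃ σ : Perm ι, ∀ i, (i ∈ s \ t ∧ σ i ∈ t \ s) ∨ (i ∈ t \ s ∧ σ i ∈ s \ t) ∨
      (i ∉ s \ t ∧ i ∉ t \ s ∧ σ i = i) := by
  let e : ↥(s \ t) ≃ ↥(t \ s) := (s \ t).equivOfCardEq (card_sdiff_comm h)
  let f : ι → ι := fun i =>
    if hs : i ∈ s \ t then e ⟨i, hs⟩ else if ht : i ∈ t \ s then e.symm ⟨i, ht⟩ else i
  have disj : ∀ i ∈ t \ s, i ∉ s \ t := fun i hi hi' =>
    (mem_sdiff.1 hi).2 (mem_sdiff.1 hi').1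
  have f_st : ∀ i (hs : i ∈ s \ t), f i = e ⟨i, hs⟩ := fun i hs => dif_pos hs
  have f_ts : ∀ i (ht : i ∈ t \ s), f i = e.symm ⟨i, ht⟩ := fun i ht =>
    (dif_neg (disj i ht)).trans (dif_pos ht)
  have f_fix : ∀ i, i ∉ s \ t → i ∉ t \ s → f i = i := fun i hs ht =>
    (dif_neg hs).trans (dif_neg ht)
  have hf : Function.Involutive f := by
    intro i
    by_cases hs : i ∈ s \ t
    · simp [f_st i hs, f_ts _ (e ⟨i, hs⟩).2]
    by_cases ht : i ∈ t \ s
    · simp [f_ts i ht, f_st _ (e.symm ⟨i, ht⟩).2]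
    · rw [f_fix i hs ht, f_fix i hs ht]
  refine ⟨hf.toPerm f, fun i => ?_⟩
  rw [hf.coe_toPerm]
  by_cases hs : i ∈ s \ t
  · exact Or.inl ⟨hs, (f_st i hs).symm ▸ (e _).2⟩
  by_cases ht : i ∈ t \ s
  · exact Or.inr (Or.inl ⟨ht, (f_ts i ht).symm ▸ (e.symm _).2⟩)
  · exact Or.inr (Or.inr ⟨hs, ht, f_fix i hs ht⟩)

namespace RobustSelection

variable {ι : Type*}

noncomputable section

def scenarioBox (ĉ : ι → ℝ) (l : ℝ) : Set (ι → ℝ) :=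
  {c | ∀ i, (1 - l) * ĉ i ≤ c i ∧ c i ≤ (1 + l) * ĉ i}

def worstScenario (ĉ : ι → ℝ) (l : ℝ) (x : ι → ℝ) : ι → ℝ :=
  fun i => if x i = 1 then (1 + l) * ĉ i else (1 - l) * ĉ i

variable {ĉ x x' x₀ : ι → ℝ} {l l' : ℝ}

theorem scenarioBox_mono (hĉ : ∀ i, 0 ≤ ĉ i) (h : l ≤ l') :
    scenarioBox ĉ l ⊆ scenarioBox ĉ l' := fun c hc i =>
  ⟨le_trans (by nlinarith [hĉ i]) (hc i).1, (hc i).2.trans (by nlinarith [hĉ i])⟩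

theorem worstScenario_mem_scenarioBox (hĉ : ∀ i, 0 ≤ ĉ i) (hl : 0 ≤ l) :
    worstScenario ĉ l x ∈ scenarioBox ĉ l := by
  intro i
  unfold worstScenario
  split_ifs <;> constructor <;> nlinarith [hĉ i]

variable [Fintype ι]

variable (ι) in
def selectionSet (p : ℕ) : Set (ι → ℝ) :=
  {y | (∀ i, y i = 0 ∨ y i = 1) ∧ ∑ i, y i = p}

def minCost (F : Set (ι → ℝ)) (c : ι → ℝ) : ℝ :=
  sInf {v | ∃ y ∈ F, v = c ⬝ᵥ y}

def regrets (ĉ : ι → ℝ) (F : Set (ι → ℝ)) (x : ι → ℝ) (l : ℝ) : Set ℝ :=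
  {v | ∃ c ∈ scenarioBox ĉ l, v = c ⬝ᵥ x - minCost F c}

def worstRegret (ĉ : ι → ℝ) (F : Set (ι → ℝ)) (l : ℝ) (x : ι → ℝ) : ℝ :=
  worstScenario ĉ l x ⬝ᵥ x - minCost F (worstScenario ĉ l x)

variable {F : Set (ι → ℝ)}

theorem minCost_le {c y : ι → ℝ} (hF : F ⊆ Set.Icc 0 1) (hy : y ∈ F) :
    minCost F c ≤ c ⬝ᵥ y := by
  refine csInf_le ⟨∑ i, -|c i|, ?_⟩ ⟨y, hy, rfl⟩
  rintro _ ⟨z, hz, rfl⟩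
  refine sum_le_sum fun i _ => ?_
  have hz₀ : 0 ≤ z i := (hF hz).1 i
  have hz₁ : z i ≤ 1 := (hF hz).2 i
  nlinarith [abs_nonneg (c i), le_abs_self (c i), neg_abs_le (c i)]

theorem minCost_worstScenario_le {c : ι → ℝ} (hx : ∀ i, x i = 0 ∨ x i = 1)
    (hF : F ⊆ Set.Icc 0 1) (hFne : F.Nonempty) (hc : c ∈ scenarioBox ĉ l) :
    minCost F (worstScenario ĉ l x) ≤ minCost F c + (worstScenario ĉ l x - c) ⬝ᵥ x := by
  set w := worstScenario ĉ l x
  obtain ⟨y₀, hy₀⟩ := hFne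
  rw [← sub_le_iff_le_add]
  refine le_csInf ⟨_, y₀, hy₀, rfl⟩ ?_
  rintro _ ⟨y, hy, rfl⟩
  -- coordinatewise, `wᵢ - cᵢ` has the sign of `xᵢ - yᵢ`
  have hw : (w - c) ⬝ᵥ y ≤ (w - c) ⬝ᵥ x := by
    refine sum_le_sum fun i _ => ?_
    have hy₀ : 0 ≤ y i := (hF hy).1 i
    have hy₁ : y i ≤ 1 := (hF hy).2 i
    obtain ⟨hc₀, hc₁⟩ := hc i
    rcases hx i with h | h <;> simp only [Pi.sub_apply, w, worstScenario, h] <;> norm_num <;>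
      nlinarith
  calc minCost F w - (w - c) ⬝ᵥ x ≤ w ⬝ᵥ y - (w - c) ⬝ᵥ y := by
        linarith [minCost_le (c := w) hF hy]
    _ = c ⬝ᵥ y := by rw [sub_dotProduct]; ring

theorem isGreatest_regrets (hĉ : ∀ i, 0 ≤ ĉ i) (hl : 0 ≤ l) (hx : ∀ i, x i = 0 ∨ x i = 1)
    (hF : F ⊆ Set.Icc 0 1) (hFne : F.Nonempty) :
    IsGreatest (regrets ĉ F x l) (worstRegret ĉ F l x) := by
  refine ⟨⟨_, worstScenario_mem_scenarioBox hĉ hl, rfl⟩, ?_⟩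
  rintro _ ⟨c, hc, rfl⟩
  have := minCost_worstScenario_le hx hF hFne hc
  rw [sub_dotProduct] at this
  unfold worstRegret
  linarith

theorem monotoneOn_sSup_regrets (hĉ : ∀ i, 0 ≤ ĉ i) (hx : ∀ i, x i = 0 ∨ x i = 1)
    (hF : F ⊆ Set.Icc 0 1) (hFne : F.Nonempty) :
    MonotoneOn (fun l => sSup (regrets ĉ F x l)) (Set.Ici 0) := by
  intro l hl l' hl' hll'
  refine csSup_le_csSup (isGreatest_regrets hĉ hl' hx hF hFne).bddAbove
    (isGreatest_regrets hĉ hl hx hF hFne).nonempty ?_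
  rintro _ ⟨c, hc, rfl⟩
  exact ⟨c, scenarioBox_mono hĉ hll' hc, rfl⟩

theorem worstScenario_dotProduct_comp (σ : Perm ι) (z : ι → ℝ) :
    worstScenario ĉ l x ⬝ᵥ z = worstScenario (ĉ ∘ σ) l (x ∘ σ) ⬝ᵥ (z ∘ σ) :=
  (Equiv.sum_comp σ _).symm

theorem worstRegret_le_of_perm (σ : Perm ι) (hl₀ : 0 ≤ l) (hl₁ : l ≤ 1)
    (hx : ∀ i, x i = 0 ∨ x i = 1) (hF : F ⊆ Set.Icc 0 1) (hFne : F.Nonempty)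
    (hFσ : ∀ y ∈ F, y ∘ σ.symm ∈ F) (hσx : x' ∘ σ = x)
    (hup : ∀ i, x i = 1 → ĉ i ≤ ĉ (σ i)) (hdown : ∀ i, x i = 0 → ĉ (σ i) ≤ ĉ i) :
    worstRegret ĉ F l x ≤ worstRegret ĉ F l x' := by
  have reindex := worstScenario_dotProduct_comp (ĉ := ĉ) (l := l) (x := x') σ
  rw [hσx] at reindex
  set w := worstScenario ĉ l x
  set w' := worstScenario ĉ l x'
  set wσ := worstScenario (ĉ ∘ σ) l x
  suffices minCost F w' + w ⬝ᵥ x - wσ ⬝ᵥ x ≤ minCost F w by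
    unfold worstRegret; rw [reindex, hσx]; linarith
  obtain ⟨y₀, hy₀⟩ := hFne
  refine le_csInf ⟨_, y₀, hy₀, rfl⟩ ?_
  rintro _ ⟨y, hy, rfl⟩
  have hy' : minCost F w' ≤ wσ ⬝ᵥ y := by
    simpa [reindex, Function.comp_assoc] using minCost_le (c := w') hF (hFσ y hy)
  have key : wσ ⬝ᵥ (y - x) ≤ w ⬝ᵥ (y - x) := by
    refine sum_le_sum fun i _ => ?_
    have hy₀ : 0 ≤ y i := (hF hy).1 i
    have hy₁ : y i ≤ 1 := (hF hy).2 i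
    rcases hx i with h | h
    · have := hdown i h
      simp only [w, wσ, worstScenario, h, Pi.sub_apply, Function.comp_apply]; norm_num
      nlinarith [mul_nonneg (sub_nonneg.2 hl₁) hy₀]
    · have := hup i h
      simp only [w, wσ, worstScenario, h, Pi.sub_apply, Function.comp_apply]; norm_num
      nlinarith [mul_nonneg (by linarith : (0:ℝ) ≤ 1 + l) (sub_nonneg.2 hy₁)]
  rw [dotProduct_sub, dotProduct_sub] at key
  linarith

variable {p : ℕ}

theorem selectionSet_subset_Icc : selectionSet ι p ⊆ Set.Icc 0 1 := fun y hy =>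
  ⟨fun i => by rcases hy.1 i with h | h <;> simp [h],
   fun i => by rcases hy.1 i with h | h <;> simp [h]⟩

theorem comp_perm_mem_selectionSet {y : ι → ℝ} (σ : Perm ι) (hy : y ∈ selectionSet ι p) :
    y ∘ σ ∈ selectionSet ι p :=
  ⟨fun i => hy.1 (σ i), (Equiv.sum_comp σ y).trans hy.2⟩

theorem card_filter_eq_one {y : ι → ℝ} (hy : ∀ i, y i = 0 ∨ y i = 1) :
    (#{i | y i = 1} : ℝ) = ∑ i, y i := by
  rw [← sum_boole]
  refine sum_congr rfl fun i _ => ?_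
  rcases hy i with h | h <;> simp [h]

theorem exists_perm_of_mem_selectionSet [DecidableEq ι] (hx : x ∈ selectionSet ι p)
    (hx' : x' ∈ selectionSet ι p) :
    ∃ σ : Perm ι, x' ∘ σ = x ∧ ∀ i, σ i = i ∨ x (σ i) ≠ x i := by
  have hcard : #{i | x i = 1} = #{i | x' i = 1} := by
    exact_mod_cast show (#{i | x i = 1} : ℝ) = #{i | x' i = 1} by
      rw [card_filter_eq_one hx.1, card_filter_eq_one hx'.1, hx.2, hx'.2]
  obtain ⟨σ, hσ⟩ := exists_perm_exchange hcard
  refine ⟨σ, funext fun i => ?_, fun i => ?_⟩ <;>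
  · have := hx.1 i; have := hx.1 (σ i); have := hx'.1 i; have := hx'.1 (σ i)
    rcases hσ i with ⟨_, _⟩ | ⟨_, _⟩ | ⟨_, _, _⟩ <;> grind

theorem sSup_regrets_le_of_nominal (hĉ : ∀ i, 0 ≤ ĉ i) (hx₀ : x₀ ∈ selectionSet ι p)
    (hx : x ∈ selectionSet ι p) (hsmall : ∀ i j, x₀ i = 1 → x₀ j = 0 → ĉ i ≤ ĉ j)
    (hl : l ∈ Set.Icc (0 : ℝ) 1) :
    sSup (regrets ĉ (selectionSet ι p) x₀ l) ≤ sSup (regrets ĉ (selectionSet ι p) x l) := by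
  classical
  have hS := selectionSet_subset_Icc (ι := ι) (p := p)
  rw [(isGreatest_regrets hĉ hl.1 hx₀.1 hS ⟨_, hx₀⟩).csSup_eq,
    (isGreatest_regrets hĉ hl.1 hx.1 hS ⟨_, hx₀⟩).csSup_eq]
  obtain ⟨σ, hσx, hσ⟩ := exists_perm_of_mem_selectionSet hx₀ hx
  refine worstRegret_le_of_perm σ hl.1 hl.2 hx₀.1 hS ⟨_, hx₀⟩
    (fun y hy => comp_perm_mem_selectionSet σ.symm hy) hσx (fun i hi => ?_) (fun i hi => ?_)
  · rcases hσ i with h | h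
    · rw [h]
    · exact hsmall i (σ i) hi ((hx₀.1 (σ i)).resolve_right (hi ▸ h))
  · rcases hσ i with h | h
    · rw [h]
    · exact hsmall (σ i) i ((hx₀.1 (σ i)).resolve_left (hi ▸ h)) hi

theorem intervalIntegrable_sSup_regrets (hĉ : ∀ i, 0 ≤ ĉ i) (hx : x ∈ selectionSet ι p) :
    IntervalIntegrable (fun l => sSup (regrets ĉ (selectionSet ι p) x l))
      MeasureTheory.volume 0 1 := by
  refine MonotoneOn.intervalIntegrable ?_
  rw [Set.uIcc_of_le zero_le_one]
  exact (monotoneOn_sSup_regrets hĉ hx.1 selectionSet_subset_Icc ⟨_, hx⟩).mono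
    Set.Icc_subset_Ici_self

end
end RobustSelection

open RobustSelection in
theorem stmt8 {n : ℕ} (p : ℕ) (chat : Fin n → ℝ) (hc : ∀ i, 0 ≤ chat i)
    (feas : (Fin n → ℝ) → Prop)
    (hfeas : ∀ x, feas x ↔ ((∀ i, x i = 0 ∨ x i = 1) ∧ ∑ i, x i = (p : ℝ)))
    (opt : (Fin n → ℝ) → ℝ)
    (hopt : ∀ c, opt c = sInf {v : ℝ | ∃ y, feas y ∧ v = ∑ i, c i * y i})
    (reg : (Fin n → ℝ) → ℝ → ℝ)
    (hreg : ∀ x l, reg x l = sSup {v : ℝ | ∃ c : Fin n → ℝ,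
        (∀ i, (1 - l) * chat i ≤ c i ∧ c i ≤ (1 + l) * chat i) ∧
        v = (∑ i, c i * x i) - opt c})
    (val : (Fin n → ℝ) → ℝ)
    (hval : ∀ x, val x = ∫ l in (0:ℝ)..1, reg x l)
    (xhat : Fin n → ℝ) (hxhatf : feas xhat)
    (hsmall : ∀ i j, xhat i = 1 → xhat j = 0 → chat i ≤ chat j) :
    ∀ x, feas x → val xhat ≤ val x := by
  intro x hx
  have hX : {y | feas y} = selectionSet (Fin n) p := Set.ext hfeas
  have hreg' : reg = fun z l => sSup (regrets chat (selectionSet (Fin n) p) z l) := by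
    funext z l
    rw [hreg, ← hX]
    simp only [hopt]
    rfl
  have hxhat : xhat ∈ selectionSet (Fin n) p := (hfeas xhat).1 hxhatf
  have hx' : x ∈ selectionSet (Fin n) p := (hfeas x).1 hx
  rw [hval, hval, hreg']
  exact intervalIntegral.integral_mono_on zero_le_one
    (intervalIntegrable_sSup_regrets hc hxhat) (intervalIntegrable_sSup_regrets hc hx')
    fun l hl => sSup_regrets_le_of_nominal hc hxhat hx' hsmall hl
end

section
/- Let ĉ ≥ 0 and x ∈ {0,1}^n with exactly k ones. For λ ∈ [0,1], items i with x_i = 1 have cost (1+λ)ĉ_i (nondecreasing in λ) and items with x_i = 0 have cost (1−λ)ĉ_i (nonincreasing in λ). Then the number of values λ ∈ [0,1] at which the strict order between the costs of some pair of items changes is at most k·(n−k). -/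
/-!
At a point where the order of two costs switches, the two (continuous) costs are equal. Two
costs of the same monotonicity type are `s * ĉ_i` and `s * ĉ_j` for one common factor
`s = 1 ± λ ≥ 0`, so their strict order never switches. A nondecreasing cost `(1 + λ) ĉ_i` and a
nonincreasing one `(1 - λ) ĉ_j` can only be equal at `λ = (ĉ_j - ĉ_i) / (ĉ_i + ĉ_j)`, so the
switching points are among the at most `k (n - k)` values of this map on mixed pairs.
-/

open Filter Topology

theorem frequently_nhds_of_forall_abs_sub_lt {s : Set ℝ} {p : ℝ → Prop} {a : ℝ}
    (h : ∀ ε > (0 : ℝ), ∃ x ∈ s, |x - a| < ε ∧ p x) : ∃ᶠ x in 𝓝 a, p x :=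
  Metric.nhds_basis_ball.frequently_iff.2 fun ε hε =>
    let ⟨x, _, hxa, hpx⟩ := h ε hε
    ⟨x, by rwa [Metric.mem_ball, Real.dist_eq], hpx⟩

theorem eq_of_frequently_lt_of_frequently_gt {X α : Type*} [TopologicalSpace X] [LinearOrder α]
    [TopologicalSpace α] [OrderClosedTopology α] {f g : X → α} {a : X}
    (hf : ContinuousAt f a) (hg : ContinuousAt g a)
    (hlt : ∃ᶠ x in 𝓝 a, f x < g x) (hgt : ∃ᶠ x in 𝓝 a, g x < f x) : f a = g a := by
  refine le_antisymm (not_lt.1 fun hga => ?_) (not_lt.1 fun hfa => ?_)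
  · obtain ⟨x, hfg, hgf⟩ := (hlt.and_eventually (hg.eventually_lt hf hga)).exists
    exact lt_asymm hfg hgf
  · obtain ⟨x, hgf, hfg⟩ := (hgt.and_eventually (hf.eventually_lt hg hfa)).exists
    exact lt_asymm hfg hgf

noncomputable def crossingPoint (a b : ℝ) : ℝ := (b - a) / (a + b)

theorem eq_crossingPoint_of_one_add_mul_eq_one_sub_mul {a b l μ : ℝ} (ha : 0 ≤ a) (hb : 0 ≤ b)
    (hl : (1 + l) * a = (1 - l) * b) (hμ : (1 + μ) * a ≠ (1 - μ) * b) :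
    l = crossingPoint a b := by
  have hab : a + b ≠ 0 := by
    intro hab
    obtain rfl : a = 0 := by linarith
    obtain rfl : b = 0 := by linarith
    simp at hμ
  rw [crossingPoint, eq_div_iff hab]
  linarith

theorem mem_image_of_order_switch {n : ℕ} {chat : Fin n → ℝ} (hc : ∀ i, 0 ≤ chat i)
    {x : Fin n → ℝ} (hx : ∀ i, x i = 0 ∨ x i = 1) {cost : Fin n → ℝ → ℝ}
    (hcost : ∀ i l, cost i l = if x i = 1 then (1 + l) * chat i else (1 - l) * chat i)
    {l : ℝ} {i j : Fin n}
    (h : ∀ ε > (0:ℝ),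
        (∃ μ ∈ Set.Icc (0:ℝ) 1, |μ - l| < ε ∧ cost i μ < cost j μ) ∧
        (∃ ν ∈ Set.Icc (0:ℝ) 1, |ν - l| < ε ∧ cost j ν < cost i ν)) :
    l ∈ (fun p : Fin n × Fin n => crossingPoint (chat p.1) (chat p.2)) ''
      ({i | x i = 1} ×ˢ {i | x i = 1}ᶜ) := by
  have hcont : ∀ m, Continuous (cost m) := fun m => by
    rw [funext (hcost m)]
    split_ifs <;> fun_prop
  have heq : cost i l = cost j l :=
    eq_of_frequently_lt_of_frequently_gt (hcont i).continuousAt (hcont j).continuousAt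
      (frequently_nhds_of_forall_abs_sub_lt fun ε hε => (h ε hε).1)
      (frequently_nhds_of_forall_abs_sub_lt fun ε hε => (h ε hε).2)
  obtain ⟨⟨μ, ⟨hμ0, hμ1⟩, -, hμ⟩, ⟨ν, ⟨hν0, hν1⟩, -, hν⟩⟩ := h 1 one_pos
  rw [hcost, hcost] at heq hμ hν
  rcases hx i with hxi | hxi <;> rcases hx j with hxj | hxj <;>
    simp only [hxi, hxj, zero_ne_one, if_true, if_false] at heq hμ hν
  · exact (lt_asymm (lt_of_mul_lt_mul_left hμ (by linarith))
      (lt_of_mul_lt_mul_left hν (by linarith))).elim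
  · refine ⟨(j, i), ⟨hxj, by simp [hxi]⟩, ?_⟩
    exact (eq_crossingPoint_of_one_add_mul_eq_one_sub_mul (hc j) (hc i) heq.symm hμ.ne').symm
  · refine ⟨(i, j), ⟨hxi, by simp [hxj]⟩, ?_⟩
    exact (eq_crossingPoint_of_one_add_mul_eq_one_sub_mul (hc i) (hc j) heq hμ.ne).symm
  · exact (lt_asymm (lt_of_mul_lt_mul_left hμ (by linarith))
      (lt_of_mul_lt_mul_left hν (by linarith))).elim

theorem stmt10 {n k : ℕ} (chat : Fin n → ℝ) (hc : ∀ i, 0 ≤ chat i)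
    (x : Fin n → ℝ) (hx : ∀ i, x i = 0 ∨ x i = 1)
    (hk : Set.ncard {i : Fin n | x i = 1} = k)
    (cost : Fin n → ℝ → ℝ)
    (hcost : ∀ i l, cost i l = if x i = 1 then (1 + l) * chat i else (1 - l) * chat i) :
    Set.ncard {l : ℝ | l ∈ Set.Icc (0:ℝ) 1 ∧ ∃ i j : Fin n,
      ∀ ε > (0:ℝ),
        (∃ μ ∈ Set.Icc (0:ℝ) 1, |μ - l| < ε ∧ cost i μ < cost j μ) ∧
        (∃ ν ∈ Set.Icc (0:ℝ) 1, |ν - l| < ε ∧ cost j ν < cost i ν)}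
      ≤ k * (n - k) := by
  calc _ ≤ ((fun p : Fin n × Fin n => crossingPoint (chat p.1) (chat p.2)) ''
          ({i | x i = 1} ×ˢ {i | x i = 1}ᶜ)).ncard :=
        Set.ncard_le_ncard (by
          rintro l ⟨-, i, j, h⟩
          exact mem_image_of_order_switch hc hx hcost h)
    _ ≤ ({i | x i = 1} ×ˢ {i | x i = 1}ᶜ).ncard := Set.ncard_image_le (Set.toFinite _)
    _ = k * (n - k) := by rw [Set.ncard_prod, Set.ncard_compl, hk, Nat.card_eq_fintype_card,
        Fintype.card_fin]
end

section
/- Let X be the spanning trees of a connected graph G=(V,E), take nominal costs ĉ_e = 1 for all e, interval uncertainty U(λ) = ∏_e [1−λ, 1+λ], λ ∈ [0,1], and compromise objective val(x) = ∫₀¹ reg(x,λ) dλ where reg(x,λ) = max_{c∈U(λ)}(cᵗx − min_{y∈X} cᵗy). Then val(x) = max_{y∈X} Σ_{e : x_e = 0} y_e, i.e. val(x) equals the maximum, over spanning trees y, of the number of edges of y not in x. Consequently any minimizer of val is an optimal solution of the min-max regret spanning tree problem with all cost intervals [0,1]. -/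
open Finset MeasureTheory

/-- `T` is (the edge set of) a spanning tree of `G`. -/
def IsSpanningTree {V : Type*} [Fintype V] (G : SimpleGraph V) (T : Finset (Sym2 V)) : Prop :=
  ↑T ⊆ G.edgeSet ∧ (SimpleGraph.fromEdgeSet (↑T : Set (Sym2 V))).Connected ∧
    T.card = Fintype.card V - 1

/-!
For costs in a box `[a, b]^E`, the regret of `x` against a competitor `y` of the same
cardinality is at most `(b - a) |y \ x|`, and the scenario "`b` on `x`, `a` elsewhere" attains
this against every `y` at once. Hence the max regret of `x` over the box is `(b - a)` times the
largest `|y \ x|`: for `[1 - λ, 1 + λ]` it is `2λ` times that number, which integrates to it,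
and for `[0, 1]` it is that number itself, so minimizers of the integral are min-max regret
spanning trees.
-/

namespace Finset

variable {α : Type*} [DecidableEq α]

theorem sum_sub_sum_le_mul_card_sdiff {s t : Finset α} (hst : s.card = t.card) {c : α → ℝ}
    {a b : ℝ} (ha : ∀ e ∈ t \ s, a ≤ c e) (hb : ∀ e ∈ s \ t, c e ≤ b) :
    ∑ e ∈ s, c e - ∑ e ∈ t, c e ≤ (b - a) * (t \ s).card := by
  have hsplit : ∑ e ∈ s, c e - ∑ e ∈ t, c e = ∑ e ∈ s \ t, c e - ∑ e ∈ t \ s, c e := by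
    rw [← sum_inter_add_sum_sdiff s t c, ← sum_inter_add_sum_sdiff t s c, inter_comm]
    ring
  have hupper : ∑ e ∈ s \ t, c e ≤ (s \ t).card • b := sum_le_card_nsmul _ _ _ hb
  have hlower : (t \ s).card • a ≤ ∑ e ∈ t \ s, c e := card_nsmul_le_sum _ _ _ ha
  rw [card_sdiff_comm hst, nsmul_eq_mul] at hupper
  rw [nsmul_eq_mul] at hlower
  linarith

theorem sum_ite_mem_of_card_eq {s t : Finset α} (hst : t.card = s.card) (a b : ℝ) :
    ∑ e ∈ t, (if e ∈ s then b else a) = b * s.card - (b - a) * (t \ s).card := by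
  rw [← sum_inter_add_sum_sdiff t s, sum_congr rfl fun e he => if_pos (mem_inter.1 he).2,
    sum_congr rfl fun e he => if_neg (mem_sdiff.1 he).2, sum_const, sum_const, nsmul_eq_mul,
    nsmul_eq_mul, ← hst, ← card_inter_add_card_sdiff t s]
  push_cast
  ring

end Finset

section MinMaxRegret

variable {α : Type*} (𝒯 : Set (Finset α))

noncomputable def minCost (c : α → ℝ) : ℝ :=
  sInf {w : ℝ | ∃ y, y ∈ 𝒯 ∧ w = ∑ e ∈ y, c e}

noncomputable def maxRegret (E : Finset α) (a b : ℝ) (x : Finset α) : ℝ :=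
  sSup {v : ℝ | ∃ c : α → ℝ, (∀ e ∈ E, a ≤ c e ∧ c e ≤ b) ∧ v = ∑ e ∈ x, c e - minCost 𝒯 c}

noncomputable def maxCardSdiff [DecidableEq α] (x : Finset α) : ℝ :=
  sSup {m : ℝ | ∃ y, y ∈ 𝒯 ∧ m = ((y \ x).card : ℝ)}

variable {𝒯} {E x : Finset α}

theorem finite_image_of_subset_powerset (h𝒯E : ∀ y ∈ 𝒯, y ⊆ E) (f : Finset α → ℝ) :
    {w : ℝ | ∃ y, y ∈ 𝒯 ∧ w = f y}.Finite :=
  ((E.powerset.finite_toSet.subset fun y hy => mem_powerset.2 (h𝒯E y hy)).image f).subset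
    (by rintro _ ⟨y, hy, rfl⟩; exact ⟨y, hy, rfl⟩)

theorem exists_minCost_eq (h𝒯E : ∀ y ∈ 𝒯, y ⊆ E) (hx : x ∈ 𝒯) (c : α → ℝ) :
    ∃ y ∈ 𝒯, ∑ e ∈ y, c e = minCost 𝒯 c := by
  have hfin := finite_image_of_subset_powerset h𝒯E fun y => ∑ e ∈ y, c e
  obtain ⟨y, hy, hm⟩ := Set.Nonempty.csInf_mem (by exact ⟨_, x, hx, rfl⟩) hfin
  exact ⟨y, hy, hm.symm⟩

variable [DecidableEq α]

theorem exists_maxCardSdiff_eq (h𝒯E : ∀ y ∈ 𝒯, y ⊆ E) (hx : x ∈ 𝒯) :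
    ∃ y ∈ 𝒯, ((y \ x).card : ℝ) = maxCardSdiff 𝒯 x := by
  have hfin := finite_image_of_subset_powerset h𝒯E fun y => ((y \ x).card : ℝ)
  obtain ⟨y, hy, hM⟩ := Set.Nonempty.csSup_mem (by exact ⟨_, x, hx, rfl⟩) hfin
  exact ⟨y, hy, hM.symm⟩

theorem card_sdiff_le_maxCardSdiff (h𝒯E : ∀ y ∈ 𝒯, y ⊆ E) {y : Finset α} (hy : y ∈ 𝒯) :
    ((y \ x).card : ℝ) ≤ maxCardSdiff 𝒯 x :=
  le_csSup (finite_image_of_subset_powerset h𝒯E _).bddAbove ⟨y, hy, rfl⟩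

theorem regret_le_mul_maxCardSdiff (h𝒯E : ∀ y ∈ 𝒯, y ⊆ E) (hcard : ∀ y ∈ 𝒯, y.card = x.card)
    (hx : x ∈ 𝒯) {a b : ℝ} (hab : a ≤ b) {c : α → ℝ} (hc : ∀ e ∈ E, a ≤ c e ∧ c e ≤ b) :
    ∑ e ∈ x, c e - minCost 𝒯 c ≤ (b - a) * maxCardSdiff 𝒯 x := by
  obtain ⟨y, hy, hmin⟩ := exists_minCost_eq h𝒯E hx c
  rw [← hmin]
  calc ∑ e ∈ x, c e - ∑ e ∈ y, c e ≤ (b - a) * (y \ x).card :=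
        sum_sub_sum_le_mul_card_sdiff (hcard y hy).symm
          (fun e he => (hc e (h𝒯E y hy (mem_sdiff.1 he).1)).1)
          (fun e he => (hc e (h𝒯E x hx (mem_sdiff.1 he).1)).2)
    _ ≤ (b - a) * maxCardSdiff 𝒯 x :=
        mul_le_mul_of_nonneg_left (card_sdiff_le_maxCardSdiff h𝒯E hy) (sub_nonneg.2 hab)

theorem regret_ite_mem_eq (h𝒯E : ∀ y ∈ 𝒯, y ⊆ E) (hcard : ∀ y ∈ 𝒯, y.card = x.card)
    (hx : x ∈ 𝒯) {a b : ℝ} (hab : a ≤ b) :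
    ∑ e ∈ x, (if e ∈ x then b else a) - minCost 𝒯 (fun e => if e ∈ x then b else a) =
      (b - a) * maxCardSdiff 𝒯 x := by
  have hcost : ∀ y ∈ 𝒯, ∑ e ∈ y, (if e ∈ x then b else a) =
      b * x.card - (b - a) * (y \ x).card := fun y hy => sum_ite_mem_of_card_eq (hcard y hy) a b
  obtain ⟨z, hz, hzM⟩ := exists_maxCardSdiff_eq h𝒯E hx
  have hmin : minCost 𝒯 (fun e => if e ∈ x then b else a) =
      b * x.card - (b - a) * maxCardSdiff 𝒯 x := by
    obtain ⟨y, hy, hmin⟩ := exists_minCost_eq h𝒯E hx fun e => if e ∈ x then b else a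
    rw [← hmin, hcost y hy]
    have hle : ((y \ x).card : ℝ) ≤ maxCardSdiff 𝒯 x := card_sdiff_le_maxCardSdiff h𝒯E hy
    have hge : ∑ e ∈ y, (if e ∈ x then b else a) ≤ ∑ e ∈ z, (if e ∈ x then b else a) := by
      rw [hmin]
      exact csInf_le (finite_image_of_subset_powerset h𝒯E _).bddBelow ⟨z, hz, rfl⟩
    rw [hcost y hy, hcost z hz, hzM] at hge
    nlinarith
  rw [hmin, hcost x hx, sdiff_self, bot_eq_empty, card_empty]
  push_cast
  ring

theorem maxRegret_eq (h𝒯E : ∀ y ∈ 𝒯, y ⊆ E) (hcard : ∀ y ∈ 𝒯, y.card = x.card) (hx : x ∈ 𝒯)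
    {a b : ℝ} (hab : a ≤ b) :
    maxRegret 𝒯 E a b x = (b - a) * maxCardSdiff 𝒯 x := by
  have hub : ∀ v ∈ {v : ℝ | ∃ c : α → ℝ, (∀ e ∈ E, a ≤ c e ∧ c e ≤ b) ∧
      v = ∑ e ∈ x, c e - minCost 𝒯 c}, v ≤ (b - a) * maxCardSdiff 𝒯 x := by
    rintro v ⟨c, hc, rfl⟩
    exact regret_le_mul_maxCardSdiff h𝒯E hcard hx hab hc
  have hattained : (b - a) * maxCardSdiff 𝒯 x ∈ {v : ℝ | ∃ c : α → ℝ,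
      (∀ e ∈ E, a ≤ c e ∧ c e ≤ b) ∧ v = ∑ e ∈ x, c e - minCost 𝒯 c} :=
    ⟨_, fun e _ => by split_ifs <;> simp [hab], (regret_ite_mem_eq h𝒯E hcard hx hab).symm⟩
  exact le_antisymm (csSup_le ⟨_, hattained⟩ hub) (le_csSup ⟨_, hub⟩ hattained)

theorem integral_maxRegret_one_sub_one_add (h𝒯E : ∀ y ∈ 𝒯, y ⊆ E)
    (hcard : ∀ y ∈ 𝒯, y.card = x.card) (hx : x ∈ 𝒯) :
    ∫ l in (0 : ℝ)..1, maxRegret 𝒯 E (1 - l) (1 + l) x = maxCardSdiff 𝒯 x := by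
  have hlinear : Set.EqOn (fun l => maxRegret 𝒯 E (1 - l) (1 + l) x)
      (fun l => 2 * maxCardSdiff 𝒯 x * l) (Set.uIcc 0 1) := by
    intro l hl
    rw [Set.uIcc_of_le zero_le_one] at hl
    simp only [maxRegret_eq h𝒯E hcard hx (by linarith [hl.1] : 1 - l ≤ 1 + l)]
    ring
  rw [intervalIntegral.integral_congr hlinear, intervalIntegral.integral_const_mul, integral_id]
  ring

end MinMaxRegret

section SpanningTree

variable {V : Type*} [Fintype V] {G : SimpleGraph V}

def spanningTrees (G : SimpleGraph V) : Set (Finset (Sym2 V)) := {T | IsSpanningTree G T}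

theorem IsSpanningTree.subset_edgeFinset [DecidableRel G.Adj] {T : Finset (Sym2 V)}
    (hT : IsSpanningTree G T) : T ⊆ G.edgeFinset :=
  fun _ he => SimpleGraph.mem_edgeFinset.2 (hT.1 he)

theorem IsSpanningTree.card_eq {T T' : Finset (Sym2 V)} (hT : IsSpanningTree G T)
    (hT' : IsSpanningTree G T') : T.card = T'.card :=
  hT.2.2.trans hT'.2.2.symm

end SpanningTree

theorem stmt12_general {V : Type*} [Fintype V] [DecidableEq V]
    (G : SimpleGraph V) [DecidableRel G.Adj]
    (reg : Finset (Sym2 V) → ℝ → ℝ)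
    (hreg : ∀ T l, reg T l = sSup {v : ℝ | ∃ c : Sym2 V → ℝ,
        (∀ e ∈ G.edgeFinset, 1 - l ≤ c e ∧ c e ≤ 1 + l) ∧
        v = (∑ e ∈ T, c e) -
          sInf {w : ℝ | ∃ Ty : Finset (Sym2 V), IsSpanningTree G Ty ∧ w = ∑ e ∈ Ty, c e}})
    (val : Finset (Sym2 V) → ℝ)
    (hval : ∀ T, val T = ∫ l in (0:ℝ)..1, reg T l)
    (reg01 : Finset (Sym2 V) → ℝ)
    (hreg01 : ∀ T, reg01 T = sSup {v : ℝ | ∃ c : Sym2 V → ℝ,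
        (∀ e ∈ G.edgeFinset, 0 ≤ c e ∧ c e ≤ 1) ∧
        v = (∑ e ∈ T, c e) -
          sInf {w : ℝ | ∃ Ty : Finset (Sym2 V), IsSpanningTree G Ty ∧ w = ∑ e ∈ Ty, c e}})
    (Tx : Finset (Sym2 V)) (hTx : IsSpanningTree G Tx) :
    val Tx = sSup {m : ℝ | ∃ Ty : Finset (Sym2 V), IsSpanningTree G Ty ∧
        m = ((Ty \ Tx).card : ℝ)} ∧
    ((∀ T, IsSpanningTree G T → val Tx ≤ val T) →
     (∀ T, IsSpanningTree G T → reg01 Tx ≤ reg01 T)) := by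
  have hE : ∀ y ∈ spanningTrees G, y ⊆ G.edgeFinset :=
    fun _ hy => IsSpanningTree.subset_edgeFinset hy
  have hval_eq : ∀ T, IsSpanningTree G T → val T = maxCardSdiff (spanningTrees G) T :=
    fun T hT => by
      simp only [hval, hreg]
      exact integral_maxRegret_one_sub_one_add hE (fun _ hy => IsSpanningTree.card_eq hy hT) hT
  have hreg01_eq : ∀ T, IsSpanningTree G T → reg01 T = maxCardSdiff (spanningTrees G) T :=
    fun T hT => (hreg01 T).trans <|
      (maxRegret_eq hE (fun _ hy => IsSpanningTree.card_eq hy hT) hT zero_le_one).trans (by ring)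
  refine ⟨hval_eq Tx hTx, fun hmin T hT => ?_⟩
  rw [hreg01_eq Tx hTx, hreg01_eq T hT, ← hval_eq Tx hTx, ← hval_eq T hT]
  exact hmin T hT

theorem stmt12 {V : Type*} [Fintype V] [DecidableEq V]
    (G : SimpleGraph V) [DecidableRel G.Adj] (hG : G.Connected)
    (reg : Finset (Sym2 V) → ℝ → ℝ)
    (hreg : ∀ T l, reg T l = sSup {v : ℝ | ∃ c : Sym2 V → ℝ,
        (∀ e ∈ G.edgeFinset, 1 - l ≤ c e ∧ c e ≤ 1 + l) ∧
        v = (∑ e ∈ T, c e) -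
          sInf {w : ℝ | ∃ Ty : Finset (Sym2 V), IsSpanningTree G Ty ∧ w = ∑ e ∈ Ty, c e}})
    (val : Finset (Sym2 V) → ℝ)
    (hval : ∀ T, val T = ∫ l in (0:ℝ)..1, reg T l)
    (reg01 : Finset (Sym2 V) → ℝ)
    (hreg01 : ∀ T, reg01 T = sSup {v : ℝ | ∃ c : Sym2 V → ℝ,
        (∀ e ∈ G.edgeFinset, 0 ≤ c e ∧ c e ≤ 1) ∧
        v = (∑ e ∈ T, c e) -
          sInf {w : ℝ | ∃ Ty : Finset (Sym2 V), IsSpanningTree G Ty ∧ w = ∑ e ∈ Ty, c e}})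
    (Tx : Finset (Sym2 V)) (hTx : IsSpanningTree G Tx) :
    val Tx = sSup {m : ℝ | ∃ Ty : Finset (Sym2 V), IsSpanningTree G Ty ∧
        m = ((Ty \ Tx).card : ℝ)} ∧
    ((∀ T, IsSpanningTree G T → val Tx ≤ val T) →
     (∀ T, IsSpanningTree G T → reg01 Tx ≤ reg01 T)) :=
  stmt12_general G reg hreg val hval reg01 hreg01 Tx hTx
end

section
/- Fix x ∈ {0,1}^E, ĉ ≥ 0, and the min-max regret shortest path setting with U(λ) = ∏_e [(1−λ)ĉ_e,(1+λ)ĉ_e]. Then for each λ ∈ [0,1], reg(x,λ) = (1+λ)Σ_{e: x_e=1} ĉ_e − min_{y∈X} [ λ·Σ_{e: x_e=1} 2ĉ_e y_e + (1−λ)·Σ_{e∈E} ĉ_e y_e ]·(−1)·(−1), i.e. the inner minimization is a weighted-sum scalarization, with weights (λ, 1−λ), of the bicriteria problem min_{y∈X} ( Σ_{e: x_e=1} 2ĉ_e y_e , Σ_{e∈E} ĉ_e y_e ). Hence every y attaining reg(x,λ) for some λ ∈ (0,1) is an extreme (supported) efficient solution of this bicriteria problem. -/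
/-!
For a fixed solution `x`, the regret `cᵗx − min_y cᵗy` is maximised over the box
`∏ₑ [(1−λ)ĉₑ, (1+λ)ĉₑ]` by the scenario that puts every edge of `x` at its upper bound and
every other edge at its lower bound: for each `y` and each edge, raising `cₑ` on `x` and
lowering it off `x` can only increase `cᵗx − cᵗy`. Under that scenario `cᵗx = (1+λ)Σ_{xₑ=1} ĉₑ`
and `cᵗy = λ f₁(y) + (1−λ) f₂(y)`, so the inner minimisation is the weighted-sum
scalarisation of `(f₁, f₂)` with weights `(λ, 1−λ)`, and its minimisers are supported.
-/

open Finset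

section WorstCaseScenario

variable {E : Type*}

def worstScenario (chat x : E → ℝ) (l : ℝ) : E → ℝ :=
  fun e => (1 - l) * chat e + 2 * l * chat e * x e

def InBox (chat : E → ℝ) (l : ℝ) (c : E → ℝ) : Prop :=
  ∀ e, (1 - l) * chat e ≤ c e ∧ c e ≤ (1 + l) * chat e

variable {chat x : E → ℝ} {l : ℝ}

lemma worstScenario_inBox (hc : ∀ e, 0 ≤ chat e) (hx : ∀ e, x e = 0 ∨ x e = 1) (hl : 0 ≤ l) :
    InBox chat l (worstScenario chat x l) := by
  intro e
  have := mul_nonneg hl (hc e)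
  rcases hx e with h | h <;> simp only [worstScenario, h] <;> constructor <;> linarith

variable [Fintype E]

lemma sum_worstScenario_mul_self (hx : ∀ e, x e = 0 ∨ x e = 1) :
    ∑ e, worstScenario chat x l e * x e = (1 + l) * ∑ e, chat e * x e := by
  rw [mul_sum]
  refine sum_congr rfl fun e _ => ?_
  rcases hx e with h | h <;> simp only [worstScenario, h] <;> ring

lemma sum_worstScenario_mul (y : E → ℝ) :
    ∑ e, worstScenario chat x l e * y e =
      l * ∑ e, 2 * chat e * x e * y e + (1 - l) * ∑ e, chat e * y e := by
  rw [mul_sum, mul_sum, ← sum_add_distrib]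
  refine sum_congr rfl fun e _ => ?_
  simp only [worstScenario]
  ring

lemma sum_sub_le_sum_worstScenario_sub {c y : E → ℝ} (hc : InBox chat l c)
    (hx : ∀ e, x e = 0 ∨ x e = 1) (hy : ∀ e, y e = 0 ∨ y e = 1) :
    ∑ e, c e * x e - ∑ e, c e * y e ≤
      ∑ e, worstScenario chat x l e * x e - ∑ e, worstScenario chat x l e * y e := by
  rw [← sum_sub_distrib, ← sum_sub_distrib]
  refine sum_le_sum fun e _ => ?_
  obtain ⟨hlo, hhi⟩ := hc e
  rcases hx e with h | h <;> rcases hy e with h' | h' <;>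
    simp only [worstScenario, h, h'] <;> linarith

lemma regret_le_regret_worstScenario {c : E → ℝ} (hc : InBox chat l c)
    (hx : ∀ e, x e = 0 ∨ x e = 1) (X : Finset (E → ℝ)) (hX : X.Nonempty)
    (hXbin : ∀ y ∈ X, ∀ e, y e = 0 ∨ y e = 1) :
    ∑ e, c e * x e - X.inf' hX (fun y => ∑ e, c e * y e) ≤
      ∑ e, worstScenario chat x l e * x e -
        X.inf' hX (fun y => ∑ e, worstScenario chat x l e * y e) := by
  obtain ⟨y, hyX, hy⟩ := exists_mem_eq_inf' hX (fun y => ∑ e, c e * y e)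
  have hmin := inf'_le (fun y => ∑ e, worstScenario chat x l e * y e) hyX
  have := sum_sub_le_sum_worstScenario_sub hc hx (hXbin y hyX)
  rw [hy]
  linarith

end WorstCaseScenario

theorem stmt15 {E : Type*} [Fintype E]
    (chat : E → ℝ) (hc : ∀ e, 0 ≤ chat e)
    (X : Finset (E → ℝ)) (hX : X.Nonempty)
    (hXbin : ∀ y ∈ X, ∀ e, y e = 0 ∨ y e = 1)
    (x : E → ℝ) (hx : ∀ e, x e = 0 ∨ x e = 1)
    (reg : ℝ → ℝ)
    (hreg : ∀ l, reg l = sSup {v : ℝ | ∃ c : E → ℝ,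
        (∀ e, (1 - l) * chat e ≤ c e ∧ c e ≤ (1 + l) * chat e) ∧
        v = (∑ e, c e * x e) - X.inf' hX (fun y => ∑ e, c e * y e)})
    (f1 f2 : (E → ℝ) → ℝ)
    (hf1 : ∀ y, f1 y = ∑ e, 2 * chat e * x e * y e)
    (hf2 : ∀ y, f2 y = ∑ e, chat e * y e) :
    (∀ l ∈ Set.Icc (0:ℝ) 1,
      reg l = (1 + l) * (∑ e, chat e * x e) -
              X.inf' hX (fun y => l * f1 y + (1 - l) * f2 y)) ∧
    (∀ l ∈ Set.Ioo (0:ℝ) 1, ∀ y ∈ X,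
      l * f1 y + (1 - l) * f2 y = X.inf' hX (fun z => l * f1 z + (1 - l) * f2 z) →
      ∃ w1 w2 : ℝ, 0 < w1 ∧ 0 < w2 ∧
        ∀ z ∈ X, w1 * f1 y + w2 * f2 y ≤ w1 * f1 z + w2 * f2 z) := by
  refine ⟨fun l hl => ?_, fun l hl y _ hymin => ⟨l, 1 - l, hl.1, sub_pos.2 hl.2, fun z hz => ?_⟩⟩
  · have hscal : X.inf' hX (fun y => ∑ e, worstScenario chat x l e * y e) =
        X.inf' hX (fun y => l * f1 y + (1 - l) * f2 y) :=
      inf'_congr hX rfl fun y _ => by rw [hf1, hf2, sum_worstScenario_mul]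
    rw [hreg l, ← sum_worstScenario_mul_self hx, ← hscal]
    refine IsGreatest.csSup_eq ⟨⟨_, worstScenario_inBox hc hx hl.1, rfl⟩, ?_⟩
    rintro v ⟨c, hcbox, rfl⟩
    exact regret_le_regret_worstScenario hcbox hx X hX hXbin
  · rw [hymin]
    exact inf'_le _ hz
end

section
/- Let G=(V,E) be a connected graph with nominal edge costs ĉ ≥ 0, fix a spanning tree x, and define scenario costs c_e(x,λ) = (1+λ)ĉ_e for e ∈ x and (1−λ)ĉ_e for e ∉ x, λ ∈ [0,1]. The number of values of λ in [0,1] at which the strict order of the edge costs c_e(x,λ) changes (i.e. at which two edge-cost functions of opposite monotonicity cross) is at most (|V|−1)(|E|−|V|+1). Consequently, there are at most (|V|−1)(|E|−|V|+1)+1 maximal subintervals of [0,1] on which a fixed sorting of the edges by cost (with fixed tie-breaking) is valid. -/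
/-!
A tree edge's cost `(1 + λ) ĉ_e` and a non-tree edge's cost `(1 - λ) ĉ_f` are affine in `λ`, so
their order can swap only where the two lines cross, at `λ = (ĉ_f - ĉ_e) / (ĉ_e + ĉ_f)`; this gives
at most one swap point per pair (tree edge, non-tree edge). Two edges on the same side of the tree
differ by a nonnegative multiple of `ĉ_e - ĉ_f` on `[-1, 1]` and never swap. Conversely, on an open
interval free of swap points the affine difference of two costs cannot change sign, since its zero,
if it lay in the interval, would be a swap point.
-/

open Finset

open Filter Topology

def IsOrderSwap (u v : ℝ → ℝ) (s : Set ℝ) (l : ℝ) : Prop :=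
  ∀ ε > (0:ℝ), (∃ μ ∈ s, |μ - l| < ε ∧ u μ < v μ) ∧ (∃ ν ∈ s, |ν - l| < ε ∧ v ν < u ν)

namespace IsOrderSwap

variable {u v : ℝ → ℝ} {s : Set ℝ} {l : ℝ}

theorem symm (h : IsOrderSwap u v s l) : IsOrderSwap v u s l :=
  fun ε hε => (h ε hε).symm

theorem frequently_lt (h : IsOrderSwap u v s l) : ∃ᶠ x in 𝓝 l, u x < v x :=
  Metric.nhds_basis_ball.frequently_iff.2 fun ε hε =>
    let ⟨μ, _, hμl, hμ⟩ := (h ε hε).1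
    ⟨μ, by rwa [Metric.mem_ball, Real.dist_eq], hμ⟩

theorem apply_eq (h : IsOrderSwap u v s l) (hu : ContinuousAt u l) (hv : ContinuousAt v l) :
    u l = v l :=
  le_antisymm
    (le_of_tendsto_of_tendsto_of_frequently hu hv (h.frequently_lt.mono fun _ => le_of_lt))
    (le_of_tendsto_of_tendsto_of_frequently hv hu (h.symm.frequently_lt.mono fun _ => le_of_lt))

theorem eq_div {α₁ β₁ α₂ β₂ : ℝ} (hu : ∀ x, u x = α₁ + β₁ * x) (hv : ∀ x, v x = α₂ + β₂ * x)
    (h : IsOrderSwap u v s l) : l = (α₂ - α₁) / (β₁ - β₂) := by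
  obtain rfl : u = fun x => α₁ + β₁ * x := funext hu
  obtain rfl : v = fun x => α₂ + β₂ * x := funext hv
  have hcross : α₁ + β₁ * l = α₂ + β₂ * l := h.apply_eq (by fun_prop) (by fun_prop)
  have hβ : β₁ - β₂ ≠ 0 := by
    intro hβ
    obtain rfl : β₁ = β₂ := sub_eq_zero.1 hβ
    obtain ⟨⟨μ, -, -, hμ⟩, -⟩ := h 1 one_pos
    simp only at hμ
    linarith
  rw [eq_div_iff hβ]
  linarith

end IsOrderSwap

section Affine

variable {u v : ℝ → ℝ} {s : Set ℝ} {a b : ℝ}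

theorem isOrderSwap_of_lt_of_gt {l : ℝ} (hs : Set.Ioo a b ⊆ s) (hl : l ∈ Set.Ioo a b)
    (hlt : ∀ x ∈ Set.Ioo a l, u x < v x) (hgt : ∀ x ∈ Set.Ioo l b, v x < u x) :
    IsOrderSwap u v s l := by
  intro ε hε
  obtain ⟨μ, hμ, hμl⟩ := exists_between (max_lt hl.1 (sub_lt_self l hε))
  obtain ⟨ν, hlν, hν⟩ := exists_between (lt_min hl.2 (lt_add_of_pos_right l hε))
  rw [max_lt_iff] at hμ
  rw [lt_min_iff] at hν
  exact ⟨⟨μ, hs ⟨hμ.1, hμl.trans hl.2⟩, abs_sub_lt_iff.2 ⟨by linarith, by linarith⟩,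
      hlt μ ⟨hμ.1, hμl⟩⟩,
    ⟨ν, hs ⟨hl.1.trans hlν, hν.1⟩, abs_sub_lt_iff.2 ⟨by linarith, by linarith⟩,
      hgt ν ⟨hlν, hν.1⟩⟩⟩

theorem isOrderSwap_of_sub_eq_mul {β r : ℝ} (hd : ∀ x, u x - v x = β * (x - r)) (hβ : β ≠ 0)
    (hs : Set.Ioo a b ⊆ s) (hr : r ∈ Set.Ioo a b) : IsOrderSwap u v s r := by
  rcases hβ.lt_or_gt with hneg | hpos
  · refine (isOrderSwap_of_lt_of_gt hs hr (fun x hx => ?_) (fun x hx => ?_)).symm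
    · exact sub_pos.1 (hd x ▸ mul_pos_of_neg_of_neg hneg (sub_neg.2 hx.2))
    · exact sub_neg.1 (hd x ▸ mul_neg_of_neg_of_pos hneg (sub_pos.2 hx.1))
  · refine isOrderSwap_of_lt_of_gt hs hr (fun x hx => ?_) (fun x hx => ?_)
    · exact sub_neg.1 (hd x ▸ mul_neg_of_pos_of_neg hpos (sub_neg.2 hx.2))
    · exact sub_pos.1 (hd x ▸ mul_pos hpos (sub_pos.2 hx.1))

theorem lt_iff_lt_of_forall_not_isOrderSwap {α₁ β₁ α₂ β₂ μ ν : ℝ}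
    (hu : ∀ x, u x = α₁ + β₁ * x) (hv : ∀ x, v x = α₂ + β₂ * x) (hs : Set.Ioo a b ⊆ s)
    (hno : ∀ r ∈ Set.Ioo a b, ¬IsOrderSwap u v s r) (hμ : μ ∈ Set.Ioo a b)
    (hν : ν ∈ Set.Ioo a b) : u μ < v μ ↔ u ν < v ν := by
  rw [← sub_neg, ← sub_neg (a := u ν)]
  by_cases hβ : β₁ - β₂ = 0
  · obtain rfl : β₁ = β₂ := sub_eq_zero.1 hβ
    simp only [hu, hv, add_sub_add_right_eq_sub]
  set r := (α₂ - α₁) / (β₁ - β₂)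
  have hd : ∀ x, u x - v x = (β₁ - β₂) * (x - r) := fun x => by
    rw [hu, hv, mul_sub, mul_div_cancel₀ _ hβ]
    ring
  have hr : r ∉ Set.Ioo a b := fun hr => hno r hr (isOrderSwap_of_sub_eq_mul hd hβ hs hr)
  have hsame : 0 < (μ - r) * (ν - r) := by
    rcases le_or_gt r a with hra | hbr
    · exact mul_pos (by linarith [hμ.1]) (by linarith [hν.1])
    · have hrb : b ≤ r := by by_contra! hrb; exact hr ⟨hbr, hrb⟩
      exact mul_pos_of_neg_of_neg (by linarith [hμ.2]) (by linarith [hν.2])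
  have hprod : 0 < (β₁ - β₂) * (μ - r) * ((β₁ - β₂) * (ν - r)) := by
    nlinarith [mul_pos (sq_pos_of_ne_zero hβ) hsame]
  rw [hd, hd]
  rcases mul_pos_iff.1 hprod with ⟨h₁, h₂⟩ | ⟨h₁, h₂⟩
  · exact iff_of_false h₁.not_gt h₂.not_gt
  · exact iff_of_true h₁ h₂

end Affine

theorem not_isOrderSwap_mul_of_nonneg {w : ℝ → ℝ} {s : Set ℝ} {l a b : ℝ}
    (hw : ∀ x ∈ s, 0 ≤ w x) : ¬IsOrderSwap (fun x => w x * a) (fun x => w x * b) s l := by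
  intro h
  obtain ⟨⟨μ, hμs, -, hμ⟩, ⟨ν, hνs, -, hν⟩⟩ := h 1 one_pos
  exact (lt_of_mul_lt_mul_left hμ (hw μ hμs)).not_gt (lt_of_mul_lt_mul_left hν (hw ν hνs))

section Scenario

variable {E : Type*} [DecidableEq E] {T F : Finset E} {c : E → ℝ}

def scenarioCost (T : Finset E) (c : E → ℝ) (e : E) (l : ℝ) : ℝ :=
  if e ∈ T then (1 + l) * c e else (1 - l) * c e

def orderSwapSet (T F : Finset E) (cost : E → ℝ → ℝ) : Set ℝ :=
  {l | l ∈ Set.Icc 0 1 ∧ ∃ e ∈ T, ∃ f ∈ F \ T, IsOrderSwap (cost e) (cost f) (Set.Icc 0 1) l}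

theorem scenarioCost_eq_add_mul (e : E) (x : ℝ) :
    scenarioCost T c e x = c e + (if e ∈ T then c e else -c e) * x := by
  unfold scenarioCost
  split_ifs <;> ring

theorem not_isOrderSwap_scenarioCost {e f : E} {s : Set ℝ} {l : ℝ} (hef : e ∈ T ↔ f ∈ T)
    (hs : s ⊆ Set.Icc (-1) 1) :
    ¬IsOrderSwap (scenarioCost T c e) (scenarioCost T c f) s l := by
  by_cases he : e ∈ T
  · unfold scenarioCost
    simp only [if_pos he, if_pos (hef.1 he)]
    exact not_isOrderSwap_mul_of_nonneg fun x hx => by linarith [(hs hx).1]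
  · unfold scenarioCost
    simp only [if_neg he, if_neg (mt hef.2 he)]
    exact not_isOrderSwap_mul_of_nonneg fun x hx => by linarith [(hs hx).2]

theorem orderSwapSet_scenarioCost_subset :
    orderSwapSet T F (scenarioCost T c) ⊆
      ↑((T ×ˢ (F \ T)).image fun p => (c p.2 - c p.1) / (c p.1 + c p.2)) := by
  rintro l ⟨-, e, he, f, hf, h⟩
  refine mem_image.2 ⟨(e, f), mem_product.2 ⟨he, hf⟩, ?_⟩
  rw [h.eq_div (scenarioCost_eq_add_mul e) (scenarioCost_eq_add_mul f),
    if_pos he, if_neg (mem_sdiff.1 hf).2, sub_neg_eq_add]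

theorem ncard_orderSwapSet_scenarioCost_le :
    (orderSwapSet T F (scenarioCost T c)).ncard ≤ #T * #(F \ T) :=
  calc (orderSwapSet T F (scenarioCost T c)).ncard
      ≤ #((T ×ˢ (F \ T)).image fun p => (c p.2 - c p.1) / (c p.1 + c p.2)) :=
        (Set.ncard_le_ncard orderSwapSet_scenarioCost_subset (finite_toSet _)).trans_eq
          (Set.ncard_coe_finset _)
    _ ≤ #T * #(F \ T) := card_image_le.trans (card_product _ _).le

theorem not_isOrderSwap_of_notMem_orderSwapSet {e f : E} {l : ℝ} (he : e ∈ F) (hf : f ∈ F)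
    (hl : l ∈ Set.Icc (0:ℝ) 1) (hS : l ∉ orderSwapSet T F (scenarioCost T c)) :
    ¬IsOrderSwap (scenarioCost T c e) (scenarioCost T c f) (Set.Icc 0 1) l := by
  intro h
  have hs : Set.Icc (0:ℝ) 1 ⊆ Set.Icc (-1) 1 := Set.Icc_subset_Icc (by norm_num) le_rfl
  by_cases heT : e ∈ T <;> by_cases hfT : f ∈ T
  · exact not_isOrderSwap_scenarioCost (iff_of_true heT hfT) hs h
  · exact hS ⟨hl, e, heT, f, mem_sdiff.2 ⟨hf, hfT⟩, h⟩
  · exact hS ⟨hl, f, hfT, e, mem_sdiff.2 ⟨he, heT⟩, h.symm⟩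
  · exact not_isOrderSwap_scenarioCost (iff_of_false heT hfT) hs h

end Scenario

theorem stmt18_general {V : Type*} [Fintype V] [DecidableEq V]
    (G : SimpleGraph V) [DecidableRel G.Adj]
    (chat : Sym2 V → ℝ)
    (Tx : Finset (Sym2 V)) (hTx : IsSpanningTree G Tx)
    (cost : Sym2 V → ℝ → ℝ)
    (hcost : ∀ e l, cost e l = if e ∈ Tx then (1 + l) * chat e else (1 - l) * chat e)
    (S : Set ℝ)
    (hS : S = {l : ℝ | l ∈ Set.Icc (0:ℝ) 1 ∧ ∃ e ∈ Tx, ∃ f ∈ G.edgeFinset \ Tx,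
        ∀ ε > (0:ℝ),
          (∃ μ ∈ Set.Icc (0:ℝ) 1, |μ - l| < ε ∧ cost e μ < cost f μ) ∧
          (∃ ν ∈ Set.Icc (0:ℝ) 1, |ν - l| < ε ∧ cost f ν < cost e ν)}) :
    Set.ncard S ≤ (Fintype.card V - 1) * (G.edgeFinset.card - Fintype.card V + 1) ∧
    ∀ a b : ℝ, Set.Ioo a b ⊆ Set.Icc 0 1 \ S →
      ∀ μ ∈ Set.Ioo a b, ∀ ν ∈ Set.Ioo a b, ∀ e ∈ G.edgeFinset, ∀ f ∈ G.edgeFinset,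
        (cost e μ < cost f μ ↔ cost e ν < cost f ν) := by
  obtain ⟨hTE, -, hTcard⟩ := hTx
  obtain rfl : cost = scenarioCost Tx chat := funext fun e => funext (hcost e)
  obtain rfl : S = orderSwapSet Tx G.edgeFinset (scenarioCost Tx chat) := hS
  refine ⟨ncard_orderSwapSet_scenarioCost_le.trans ?_, fun a b hab μ hμ ν hν e he f hf => ?_⟩
  · have hTsub : Tx ⊆ G.edgeFinset := fun e he => SimpleGraph.mem_edgeFinset.2 (hTE he)
    rw [card_sdiff_of_subset hTsub, hTcard]
    exact Nat.mul_le_mul_left _ (by omega)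
  · exact lt_iff_lt_of_forall_not_isOrderSwap (scenarioCost_eq_add_mul e)
      (scenarioCost_eq_add_mul f) (fun x hx => (hab hx).1)
      (fun r hr => not_isOrderSwap_of_notMem_orderSwapSet he hf (hab hr).1 (hab hr).2) hμ hν

theorem stmt18 {V : Type*} [Fintype V] [DecidableEq V]
    (G : SimpleGraph V) [DecidableRel G.Adj] (hG : G.Connected)
    (chat : Sym2 V → ℝ) (hc : ∀ e, 0 ≤ chat e)
    (Tx : Finset (Sym2 V)) (hTx : IsSpanningTree G Tx)
    (cost : Sym2 V → ℝ → ℝ)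
    (hcost : ∀ e l, cost e l = if e ∈ Tx then (1 + l) * chat e else (1 - l) * chat e)
    (S : Set ℝ)
    (hS : S = {l : ℝ | l ∈ Set.Icc (0:ℝ) 1 ∧ ∃ e ∈ Tx, ∃ f ∈ G.edgeFinset \ Tx,
        ∀ ε > (0:ℝ),
          (∃ μ ∈ Set.Icc (0:ℝ) 1, |μ - l| < ε ∧ cost e μ < cost f μ) ∧
          (∃ ν ∈ Set.Icc (0:ℝ) 1, |ν - l| < ε ∧ cost f ν < cost e ν)}) :
    Set.ncard S ≤ (Fintype.card V - 1) * (G.edgeFinset.card - Fintype.card V + 1) ∧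
    ∀ a b : ℝ, Set.Ioo a b ⊆ Set.Icc 0 1 \ S →
      ∀ μ ∈ Set.Ioo a b, ∀ ν ∈ Set.Ioo a b, ∀ e ∈ G.edgeFinset, ∀ f ∈ G.edgeFinset,
        (cost e μ < cost f μ ↔ cost e ν < cost f ν) :=
  stmt18_general G chat Tx hTx cost hcost S hS
end
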